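/- arXiv:1912.13377 — 7 statements merged into one kernel-verified Lean document; each statement's English description precedes it below -/
import Mathlib

section
/- Let \mathcal{X} be a countable set and let d_1, ..., d_K be distributions on \mathcal{X} that are linearly independent in the real vector space of functions \mathcal{X} \to \mathbb{R}. Then for a K \times K real matrix P, the following are equivalent: (i) P is right stochastic and there exist distributions f_1, ..., f_K on \mathcal{X} with d_i(x) = \sum_{j=1}^K P_{ij} f_j(x) for all i and all x; (ii) P is an invertible right stochastic matrix and \sum_{i=1}^K (P^{-1})_{ji} d_i(x) \ge 0 for all j \in \{1,...,K\} and all x \in \mathcal{X}. -/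
/-!
Read `d` and `f` as `K × 𝒳` matrices, so that the decomposition says `d = P * f`. As `d` has
linearly independent rows, so does `P`; hence `P` is invertible and `f = P⁻¹ * d` is forced.
Conversely, the rows of `P⁻¹ * d` have total mass `1` because `P⁻¹` inherits unit row sums
from `P`.
-/

open scoped BigOperators

/-- A function `f : 𝒳 → ℝ` on a countable set is a distribution if it is nonnegative,
summable, and its sum over `𝒳` equals `1`. -/
def IsDistribution {𝒳 : Type*} (f : 𝒳 → ℝ) : Prop :=
  (∀ x, 0 ≤ f x) ∧ Summable f ∧ ∑' x, f x = 1

/-- A `K × K` real matrix is right stochastic if all its entries are nonnegative and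
each of its rows sums to `1`. -/
def RightStochastic {K : ℕ} (P : Matrix (Fin K) (Fin K) ℝ) : Prop :=
  (∀ i j, 0 ≤ P i j) ∧ ∀ i, ∑ j, P i j = 1

namespace Matrix

variable {m n R : Type*} [Fintype n] [DecidableEq n]

theorem isUnit_of_linearIndependent_row_mul [Field R] {A : Matrix n n R} {B : Matrix n m R}
    (h : LinearIndependent R (A * B).row) : IsUnit A := by
  rw [← vecMul_injective_iff] at h
  rw [← vecMul_injective_iff_isUnit]
  refine Function.Injective.of_comp (f := B.vecMul) ?_
  simpa only [Function.comp_def, vecMul_vecMul] using h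

theorem sum_inv_row_eq_one [CommRing R] {A : Matrix n n R} (hA : ∀ i, ∑ j, A i j = 1)
    (hdet : IsUnit A.det) (i : n) : ∑ j, A⁻¹ i j = 1 := by
  have hA1 : A *ᵥ 1 = 1 := funext fun i => by simp [mulVec, dotProduct, hA i]
  have hinv1 : A⁻¹ *ᵥ 1 = 1 := by
    rw [← hA1, mulVec_mulVec, nonsing_inv_mul A hdet, one_mulVec, hA1]
  simpa [mulVec, dotProduct] using congrFun hinv1 i

end Matrix

theorem isDistribution_sum_mul {ι 𝒳 : Type*} [Fintype ι] {d : ι → 𝒳 → ℝ}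
    (hd : ∀ i, IsDistribution (d i)) {c : ι → ℝ} (hc : ∑ i, c i = 1)
    (hnonneg : ∀ x, 0 ≤ ∑ i, c i * d i x) : IsDistribution fun x => ∑ i, c i * d i x := by
  have hsum : ∀ i ∈ Finset.univ, Summable fun x => c i * d i x :=
    fun i _ => (hd i).2.1.mul_left (c i)
  refine ⟨hnonneg, summable_sum hsum, ?_⟩
  simp only [Summable.tsum_finsetSum hsum, tsum_mul_left, (hd _).2.2, mul_one, hc]

theorem decomposition_problem_iff_P_problem_general
    {𝒳 : Type*} {K : ℕ}
    (d : Fin K → 𝒳 → ℝ) (hd : ∀ i, IsDistribution (d i))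
    (hind : LinearIndependent ℝ d)
    (P : Matrix (Fin K) (Fin K) ℝ) :
    (RightStochastic P ∧ ∃ f : Fin K → 𝒳 → ℝ, (∀ j, IsDistribution (f j)) ∧
        ∀ (i : Fin K) (x : 𝒳), d i x = ∑ j, P i j * f j x)
      ↔
    (RightStochastic P ∧ IsUnit P.det ∧
        ∀ (j : Fin K) (x : 𝒳), 0 ≤ ∑ i, P⁻¹ j i * d i x) := by
  let D : Matrix (Fin K) 𝒳 ℝ := d
  have hdecomp_iff : ∀ F : Matrix (Fin K) 𝒳 ℝ,
      (∀ i x, d i x = ∑ j, P i j * F j x) ↔ D = P * F := fun F => by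
    rw [← Matrix.ext_iff]
    simp only [D, Matrix.mul_apply]
  constructor
  · rintro ⟨hP, f, hf, hdf⟩
    replace hdf := (hdecomp_iff f).1 hdf
    have hdet : IsUnit P.det :=
      (Matrix.isUnit_iff_isUnit_det P).1 <|
        Matrix.isUnit_of_linearIndependent_row_mul (B := f) (by rw [← hdf]; exact hind)
    have hf_eq : P⁻¹ * D = f := hdf ▸ Matrix.nonsing_inv_mul_cancel_left (B := f) _ hdet
    refine ⟨hP, hdet, fun j x => ?_⟩
    have hfjx : ∑ i, P⁻¹ j i * d i x = f j x := congrFun (congrFun hf_eq j) x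
    exact hfjx ▸ (hf j).1 x
  · rintro ⟨hP, hdet, hnonneg⟩
    refine ⟨hP, P⁻¹ * D, fun j => isDistribution_sum_mul hd
      (Matrix.sum_inv_row_eq_one hP.2 hdet j) (hnonneg j), ?_⟩
    exact (hdecomp_iff _).2 (Matrix.mul_nonsing_inv_cancel_left _ _ hdet).symm

/-- For linearly independent source distributions `d 1, ..., d K`, a matrix `P` is a mixture
matrix of a distribution decomposition (Problem 1) iff `P` is an invertible right stochastic
matrix such that `∑ i, P⁻¹ j i * d i x ≥ 0` for all `j` and `x` (Problem 2). -/
theorem decomposition_problem_iff_P_problem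
    {𝒳 : Type*} [Countable 𝒳] {K : ℕ}
    (d : Fin K → 𝒳 → ℝ) (hd : ∀ i, IsDistribution (d i))
    (hind : LinearIndependent ℝ d)
    (P : Matrix (Fin K) (Fin K) ℝ) :
    (RightStochastic P ∧ ∃ f : Fin K → 𝒳 → ℝ, (∀ j, IsDistribution (f j)) ∧
        ∀ (i : Fin K) (x : 𝒳), d i x = ∑ j, P i j * f j x)
      ↔
    (RightStochastic P ∧ IsUnit P.det ∧
        ∀ (j : Fin K) (x : 𝒳), 0 ≤ ∑ i, P⁻¹ j i * d i x) :=
  decomposition_problem_iff_P_problem_general d hd hind P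
end

section
/- Let \mathcal{X} be a countable set and let d_1, ..., d_K be distributions on \mathcal{X} that are linearly independent in the real vector space of functions \mathcal{X} \to \mathbb{R}. Let \mathfrak{P} be the set of all right stochastic K \times K real matrices P such that there exist distributions f_1, ..., f_K on \mathcal{X} with d_i(x) = \sum_{j=1}^K P_{ij} f_j(x) for all i and x. Then there exists \hat{P} \in \mathfrak{P} with |\det \hat{P}| \le |\det P| for all P \in \mathfrak{P}, and moreover \det \hat{P} \ne 0. -/
/-!
Fix points `x₁, …, x_K` at which the evaluation matrix `D = (dᵢ(x_k))` is invertible; they exist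
because the `dᵢ` are linearly independent. If `d = P f` with distributions `f`, then `D = P F` with
`F = (f_j(x_k))` having entries in `[0, 1]`, so `|det D| ≤ |det P| · K!`: determinants of mixture
matrices are bounded away from `0`. On such matrices the decomposition is forced, `f = P⁻¹ d`, and
membership in `𝔓` amounts to `P` being stochastic with `P⁻¹ d ≥ 0`, i.e. `det P · adj P · d ≥ 0`.
With the lower bound on `|det P|` this is a closed condition, so `𝔓` is compact and `|det|`
attains its minimum on it, at a matrix with nonzero determinant.
-/

open scoped BigOperators

open Matrix

theorem IsDistribution.le_one {𝒳 : Type*} {f : 𝒳 → ℝ} (hf : IsDistribution f) (x : 𝒳) :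
    f x ≤ 1 :=
  hf.2.2 ▸ hf.2.1.le_tsum x fun y _ => hf.1 y

theorem Matrix.det_smul_adjugate {n R : Type*} [Fintype n] [DecidableEq n] [Field R]
    (A : Matrix n n R) : A.det • A.adjugate = A.det ^ 2 • A⁻¹ := by
  rw [inv_def, Ring.inverse_eq_inv', smul_smul]
  rcases eq_or_ne A.det 0 with h | h
  · simp [h]
  · rw [sq, mul_inv_cancel_right₀ h]

theorem Matrix.abs_det_le_factorial_of_abs_le_one {n : Type*} [Fintype n] [DecidableEq n]
    {A : Matrix n n ℝ} (hA : ∀ i j, |A i j| ≤ 1) : |A.det| ≤ (Fintype.card n).factorial := by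
  simpa using det_le (abv := AbsoluteValue.abs) hA

namespace RightStochastic

variable {K : ℕ} {P : Matrix (Fin K) (Fin K) ℝ}

theorem mulVec_one (hP : RightStochastic P) : P *ᵥ 1 = 1 := by
  ext i
  simpa [mulVec, dotProduct] using hP.2 i

theorem inv_mulVec_one (hP : RightStochastic P) (hdet : IsUnit P.det) : P⁻¹ *ᵥ 1 = 1 := by
  rw [← hP.mulVec_one, mulVec_mulVec, nonsing_inv_mul P hdet, one_mulVec, hP.mulVec_one]

theorem le_one (hP : RightStochastic P) (i j : Fin K) : P i j ≤ 1 :=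
  hP.2 i ▸ Finset.single_le_sum (fun j _ => hP.1 i j) (Finset.mem_univ j)

end RightStochastic

theorem isCompact_setOf_rightStochastic (K : ℕ) :
    IsCompact {P : Matrix (Fin K) (Fin K) ℝ | RightStochastic P} := by
  have hbox : IsCompact
      (Set.univ.pi fun _ : Fin K => Set.univ.pi fun _ : Fin K => Set.Icc (0 : ℝ) 1) :=
    isCompact_univ_pi fun _ => isCompact_univ_pi fun _ => isCompact_Icc
  refine hbox.of_isClosed_subset ?_ fun P hP i _ j _ => ⟨hP.1 i j, hP.le_one i j⟩
  simp only [RightStochastic, Set.ofPred_and, Set.ofPred_forall]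
  exact (isClosed_iInter fun i => isClosed_iInter fun j =>
      isClosed_le continuous_const (by fun_prop)).inter
    (isClosed_iInter fun i => isClosed_eq (by fun_prop) continuous_const)

section EvaluationPoints

variable {ι 𝒳 𝕜 : Type*} [Field 𝕜] [Fintype ι] {d : ι → 𝒳 → 𝕜}

theorem LinearIndependent.span_range_eval_eq_top (hd : LinearIndependent 𝕜 d) :
    Submodule.span 𝕜 (Set.range fun x i => d i x) = ⊤ := by
  classical
  by_contra h
  obtain ⟨φ, hφ, hker⟩ := Submodule.exists_le_ker_of_lt_top _ (lt_top_iff_ne_top.2 h)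
  have hcoef : ∑ i, φ (Pi.single i 1) • d i = 0 := by
    funext x
    have hx := hker (Submodule.subset_span ⟨x, rfl⟩)
    rw [LinearMap.mem_ker, LinearMap.pi_apply_eq_sum_univ] at hx
    simp only [← Pi.single_apply, Pi.single_comm _ (1 : 𝕜)] at hx
    simpa [mul_comm] using hx
  refine hφ (LinearMap.pi_ext' fun i => LinearMap.ext_ring ?_)
  simpa [Pi.single_apply, eq_comm] using Fintype.linearIndependent_iff.1 hd _ hcoef i

theorem LinearIndependent.exists_det_eval_ne_zero [DecidableEq ι] (hd : LinearIndependent 𝕜 d) :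
    ∃ x : ι → 𝒳, (Matrix.of fun i k => d i (x k)).det ≠ 0 := by
  obtain ⟨κ, a, -, hspan, hli⟩ := exists_linearIndependent' 𝕜 fun x i => d i x
  rw [hd.span_range_eval_eq_top] at hspan
  let e := (Module.Basis.mk hli hspan.ge).indexEquiv (Pi.basisFun 𝕜 ι)
  refine ⟨a ∘ e.symm, (isUnit_iff_isUnit_det _).1 ?_ |>.ne_zero⟩
  exact linearIndependent_cols_iff_isUnit.1 (hli.comp e.symm e.symm.injective)

end EvaluationPoints

section Mixture

variable {𝒳 : Type*} {K : ℕ}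

/-- The set `𝔓` of the statement. -/
def mixtureMatrices (d : Fin K → 𝒳 → ℝ) : Set (Matrix (Fin K) (Fin K) ℝ) :=
  {P | RightStochastic P ∧ ∃ f : Fin K → 𝒳 → ℝ, (∀ j, IsDistribution (f j)) ∧
    ∀ (i : Fin K) (x : 𝒳), d i x = ∑ j, P i j * f j x}

variable {d : Fin K → 𝒳 → ℝ} {P : Matrix (Fin K) (Fin K) ℝ}

theorem one_mem_mixtureMatrices (hd : ∀ i, IsDistribution (d i)) : 1 ∈ mixtureMatrices d :=
  ⟨⟨fun i j => by by_cases h : i = j <;> simp [one_apply, h],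
    fun i => by simp [one_apply]⟩, d, hd, fun i x => by simp [one_apply]⟩

theorem abs_det_eval_le_of_mem_mixtureMatrices (hP : P ∈ mixtureMatrices d) (x : Fin K → 𝒳) :
    |(Matrix.of fun i k => d i (x k)).det| ≤ |P.det| * K.factorial := by
  obtain ⟨-, f, hf, hdf⟩ := hP
  have hfactor : (Matrix.of fun i k => d i (x k)) = P * Matrix.of fun j k => f j (x k) := by
    ext i k
    simp [mul_apply, hdf i (x k)]
  have hF : |(Matrix.of fun j k => f j (x k)).det| ≤ (Fintype.card (Fin K)).factorial :=
    abs_det_le_factorial_of_abs_le_one fun j k =>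
      abs_le.2 ⟨neg_one_lt_zero.le.trans ((hf j).1 (x k)), (hf j).le_one (x k)⟩
  rw [Fintype.card_fin] at hF
  rw [hfactor, det_mul, abs_mul]
  exact mul_le_mul_of_nonneg_left hF (abs_nonneg _)

theorem LinearIndependent.exists_pos_le_abs_det_of_mem_mixtureMatrices
    (hind : LinearIndependent ℝ d) : ∃ c > 0, ∀ P ∈ mixtureMatrices d, c ≤ |P.det| := by
  obtain ⟨x, hx⟩ := hind.exists_det_eval_ne_zero
  refine ⟨|(Matrix.of fun i k => d i (x k)).det| / K.factorial, by positivity, fun P hP => ?_⟩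
  rw [div_le_iff₀ (by positivity)]
  exact abs_det_eval_le_of_mem_mixtureMatrices hP x

theorem mem_mixtureMatrices_iff (hd : ∀ i, IsDistribution (d i)) (hdet : IsUnit P.det) :
    P ∈ mixtureMatrices d ↔ RightStochastic P ∧ ∀ x, 0 ≤ P⁻¹ *ᵥ fun i => d i x := by
  refine ⟨fun ⟨hP, f, hf, hdf⟩ => ⟨hP, fun x => ?_⟩, fun ⟨hP, hnonneg⟩ => ⟨hP, ?_⟩⟩
  · have hdx : (fun i => d i x) = P *ᵥ fun j => f j x := funext fun i => hdf i x
    rw [hdx, mulVec_mulVec, nonsing_inv_mul P hdet, one_mulVec]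
    exact fun j => (hf j).1 x
  · have hsummable (j : Fin K) : ∀ i ∈ Finset.univ, Summable fun x => P⁻¹ j i * d i x :=
      fun i _ => (hd i).2.1.mul_left _
    refine ⟨fun j x => (P⁻¹ *ᵥ fun i => d i x) j, fun j => ⟨fun x => hnonneg x j,
      summable_sum (hsummable j), ?_⟩, fun i x => ?_⟩
    · simp only [mulVec, dotProduct]
      rw [Summable.tsum_finsetSum (hsummable j)]
      simpa [tsum_mul_left, (hd _).2.2, mulVec, dotProduct] using
        congrFun (hP.inv_mulVec_one hdet) j
    · change d i x = (P *ᵥ P⁻¹ *ᵥ fun i => d i x) i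
      rw [mulVec_mulVec, mul_nonsing_inv P hdet, one_mulVec]

theorem isCompact_mixtureMatrices (hd : ∀ i, IsDistribution (d i)) {c : ℝ} (hc : 0 < c)
    (hbound : ∀ P ∈ mixtureMatrices d, c ≤ |P.det|) : IsCompact (mixtureMatrices d) := by
  have hunit {P : Matrix (Fin K) (Fin K) ℝ} (h : c ≤ |P.det|) : IsUnit P.det :=
    isUnit_iff_ne_zero.2 (abs_pos.1 (hc.trans_le h))
  -- `det P • adj P = det P ^ 2 • P⁻¹` has the sign pattern of `P⁻¹` and is continuous in `P`.
  have hclosed : IsClosed {P : Matrix (Fin K) (Fin K) ℝ |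
      c ≤ |P.det| ∧ ∀ x, 0 ≤ (P.det • P.adjugate) *ᵥ fun i => d i x} := by
    simp only [Set.ofPred_and, Set.ofPred_forall]
    exact (isClosed_le continuous_const (by fun_prop)).inter
      (isClosed_iInter fun x => isClosed_le continuous_const (by fun_prop))
  convert (isCompact_setOf_rightStochastic K).inter_right hclosed using 1
  ext P
  refine ⟨fun hP => ⟨hP.1, hbound P hP, fun x => ?_⟩, fun ⟨hP, hc, hnonneg⟩ => ?_⟩
  · rw [det_smul_adjugate, smul_mulVec]
    exact smul_nonneg (sq_nonneg _)
      (((mem_mixtureMatrices_iff hd (hunit (hbound P hP))).1 hP).2 x)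
  · refine (mem_mixtureMatrices_iff hd (hunit hc)).2 ⟨hP, fun x j => ?_⟩
    have hx := hnonneg x j
    rw [det_smul_adjugate, smul_mulVec] at hx
    exact nonneg_of_mul_nonneg_right hx (sq_pos_of_ne_zero (hunit hc).ne_zero)

end Mixture

theorem extreme_mixture_matrix_exists_general
    {𝒳 : Type*} {K : ℕ}
    (d : Fin K → 𝒳 → ℝ) (hd : ∀ i, IsDistribution (d i))
    (hind : LinearIndependent ℝ d) :
    ∃ Phat ∈ {P : Matrix (Fin K) (Fin K) ℝ | RightStochastic P ∧
        ∃ f : Fin K → 𝒳 → ℝ, (∀ j, IsDistribution (f j)) ∧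
          ∀ (i : Fin K) (x : 𝒳), d i x = ∑ j, P i j * f j x},
      (∀ P ∈ {P : Matrix (Fin K) (Fin K) ℝ | RightStochastic P ∧
          ∃ f : Fin K → 𝒳 → ℝ, (∀ j, IsDistribution (f j)) ∧
            ∀ (i : Fin K) (x : 𝒳), d i x = ∑ j, P i j * f j x},
        |Phat.det| ≤ |P.det|) ∧ Phat.det ≠ 0 := by
  obtain ⟨c, hc, hbound⟩ := hind.exists_pos_le_abs_det_of_mem_mixtureMatrices
  obtain ⟨Phat, hPhat, hmin⟩ := (isCompact_mixtureMatrices hd hc hbound).exists_isMinOn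
    ⟨1, one_mem_mixtureMatrices hd⟩ (continuous_id.matrix_det.abs).continuousOn
  exact ⟨Phat, hPhat, fun P hP => hmin hP, abs_pos.1 (hc.trans_le (hbound Phat hPhat))⟩

/-- For linearly independent source distributions, there exists an extreme mixture matrix,
i.e. a mixture matrix `P̂` minimizing `|det P|` over the set `𝔓` of all mixture matrices of
distribution decompositions; moreover `det P̂ ≠ 0`. -/
theorem extreme_mixture_matrix_exists
    {𝒳 : Type*} [Countable 𝒳] {K : ℕ}
    (d : Fin K → 𝒳 → ℝ) (hd : ∀ i, IsDistribution (d i))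
    (hind : LinearIndependent ℝ d) :
    ∃ Phat ∈ {P : Matrix (Fin K) (Fin K) ℝ | RightStochastic P ∧
        ∃ f : Fin K → 𝒳 → ℝ, (∀ j, IsDistribution (f j)) ∧
          ∀ (i : Fin K) (x : 𝒳), d i x = ∑ j, P i j * f j x},
      (∀ P ∈ {P : Matrix (Fin K) (Fin K) ℝ | RightStochastic P ∧
          ∃ f : Fin K → 𝒳 → ℝ, (∀ j, IsDistribution (f j)) ∧
            ∀ (i : Fin K) (x : 𝒳), d i x = ∑ j, P i j * f j x},
        |Phat.det| ≤ |P.det|) ∧ Phat.det ≠ 0 :=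
  extreme_mixture_matrix_exists_general d hd hind
end

section
/- If Q is a right stochastic K \times K real matrix with |\det Q| = 1, then Q is a permutation matrix, i.e. there is a permutation \sigma of \{1,...,K\} with Q_{ij} = 1 if j = \sigma(i) and 0 otherwise. -/
/-! Expanding `∏ i, ∑ j, A i j = 1` over all functions `f : n → n` splits it into the sum of
`∏ i, A i (f i)` over permutations (the permanent of `Aᵀ`) plus the nonnegative terms of the
non-injective `f`. Since `|det A|` is bounded by the permanent, `|det A| = 1` forces every
non-injective term to vanish. As `det A ≠ 0`, some permutation `σ` has `A i (σ i) ≠ 0` for all `i`;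
redirecting `σ` at `i` to a column `j ≠ σ i` gives a non-injective function, hence `A i j = 0`. -/

open scoped BigOperators

open Finset Function Equiv

theorem Fintype.sum_perm_add_sum_not_injective {n M : Type*} [Fintype n] [DecidableEq n]
    [AddCommMonoid M] (g : (n → n) → M) :
    ∑ σ : Perm n, g σ + ∑ f with ¬Injective f, g f = ∑ f, g f := by
  rw [← sum_filter_add_sum_filter_not univ Injective]
  congr 1
  refine sum_bij (fun σ _ => ⇑σ) (fun σ _ => by simpa using σ.injective)
    (fun _ _ _ _ h => DFunLike.coe_injective h) (fun f hf => ?_) (fun _ _ => rfl)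
  exact ⟨.ofBijective f (Finite.injective_iff_bijective.1 (mem_filter.1 hf).2), mem_univ _, rfl⟩

theorem Equiv.Perm.not_injective_update {n : Type*} [DecidableEq n] (σ : Perm n) {i j : n}
    (hj : j ≠ σ i) : ¬Injective (update σ i j) := by
  intro hinj
  have hne : σ.symm j ≠ i := fun h => hj (by rw [← h, apply_symm_apply])
  exact hne (hinj (by rw [update_of_ne hne, update_self, apply_symm_apply]))

namespace Matrix

variable {n R : Type*} [DecidableEq n]

theorem permMatrix_apply [Zero R] [One R] (σ : Perm n) (i j : n) :
    σ.permMatrix R i j = if j = σ i then 1 else 0 := by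
  simp [eq_comm]

variable [Fintype n]

theorem permanent_transpose_add_sum_not_injective [CommSemiring R] (A : Matrix n n R) :
    Aᵀ.permanent + ∑ f : n → n with ¬Injective f, ∏ i, A i (f i) = ∏ i, ∑ j, A i j := by
  rw [Fintype.prod_sum fun i j => A i j]
  exact Fintype.sum_perm_add_sum_not_injective fun f => ∏ i, A i (f i)

theorem exists_perm_forall_ne_zero_of_det_ne_zero [CommRing R] {A : Matrix n n R}
    (hA : A.det ≠ 0) : ∃ σ : Perm n, ∀ i, A i (σ i) ≠ 0 := by
  rw [← det_transpose, det_apply] at hA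
  obtain ⟨σ, -, hσ⟩ := exists_ne_zero_of_sum_ne_zero hA
  exact ⟨σ, fun i hi => right_ne_zero_of_smul hσ (prod_eq_zero (mem_univ i) hi)⟩

variable [CommRing R] [LinearOrder R] [IsStrictOrderedRing R] {A : Matrix n n R}

theorem abs_det_le_permanent (hA : ∀ i j, 0 ≤ A i j) : |A.det| ≤ A.permanent := by
  rw [det_apply]
  refine (abs_sum_le_sum_abs _ _).trans_eq (sum_congr rfl fun σ _ => ?_)
  rw [Units.smul_def, zsmul_eq_mul, abs_mul, abs_unit_intCast, one_mul]
  exact abs_of_nonneg (prod_nonneg fun i _ => hA _ _)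

theorem prod_eq_zero_of_not_injective_of_one_le_abs_det (hA : ∀ i j, 0 ≤ A i j)
    (hrow : ∀ i, ∑ j, A i j = 1) (hdet : 1 ≤ |A.det|) {f : n → n} (hf : ¬Injective f) :
    ∏ i, A i (f i) = 0 := by
  have hexpand := permanent_transpose_add_sum_not_injective A
  simp only [hrow, prod_const_one] at hexpand
  have hperm : 1 ≤ Aᵀ.permanent :=
    hdet.trans (by simpa using abs_det_le_permanent (A := Aᵀ) fun i j => hA j i)
  have hnonneg : ∀ g ∈ univ.filter (¬Injective ·), 0 ≤ ∏ i, A i (g i) :=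
    fun g _ => prod_nonneg fun i _ => hA i (g i)
  exact (sum_eq_zero_iff_of_nonneg hnonneg).1 (le_antisymm (by linarith) (sum_nonneg hnonneg)) f
    (by simpa using hf)

theorem exists_eq_permMatrix_of_abs_det_eq_one (hA : ∀ i j, 0 ≤ A i j)
    (hrow : ∀ i, ∑ j, A i j = 1) (hdet : |A.det| = 1) : ∃ σ : Perm n, A = σ.permMatrix R := by
  obtain ⟨σ, hσ⟩ := exists_perm_forall_ne_zero_of_det_ne_zero (A := A)
    (abs_pos.1 (hdet ▸ one_pos))
  have hoff : ∀ i j, j ≠ σ i → A i j = 0 := by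
    intro i j hj
    obtain ⟨k, -, hk⟩ := prod_eq_zero_iff.1 <|
      prod_eq_zero_of_not_injective_of_one_le_abs_det hA hrow hdet.ge (σ.not_injective_update hj)
    by_cases hki : k = i
    · simpa [hki] using hk
    · exact absurd (by simpa [update_of_ne hki] using hk) (hσ k)
  refine ⟨σ, ext fun i j => ?_⟩
  rw [permMatrix_apply]
  by_cases hj : j = σ i
  · subst hj
    rw [if_pos rfl, ← hrow i]
    exact (sum_eq_single (σ i) (fun j _ hj => hoff i j hj) (absurd (mem_univ _))).symm
  · rw [hoff i j hj, if_neg hj]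

end Matrix

/-- A right stochastic matrix whose determinant has absolute value `1` is a permutation
matrix. -/
theorem stochastic_abs_det_eq_one_is_permutation
    {K : ℕ} (Q : Matrix (Fin K) (Fin K) ℝ) (hQ : RightStochastic Q)
    (hdet : |Q.det| = 1) :
    ∃ σ : Equiv.Perm (Fin K), ∀ i j, Q i j = if j = σ i then 1 else 0 := by
  obtain ⟨σ, rfl⟩ := Matrix.exists_eq_permMatrix_of_abs_det_eq_one hQ.1 hQ.2 hdet
  exact ⟨σ, Matrix.permMatrix_apply σ⟩
end

section
/- Let D be a K \times K right stochastic real matrix and let P and F be K \times K right stochastic real matrices with D = P F. Then |\det P| \ge |\det D|. Consequently, since D = D \cdot I with the identity matrix I right stochastic, the matrix D itself attains the minimum of |\det P| over all right stochastic factorizations D = P F into right stochastic matrices. -/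
open scoped BigOperators

namespace Matrix

variable {n R : Type*} [Fintype n] [DecidableEq n] [CommRing R] [LinearOrder R]
  [IsStrictOrderedRing R]

/-- Expanding `∏ i, ∑ j, |A i j|` gives a sum over all maps `n → n`, which contains
the terms of the Leibniz expansion of `det A` (the bijective maps) in absolute value. -/
theorem abs_det_le_prod_sum_abs (A : Matrix n n R) : |A.det| ≤ ∏ i, ∑ j, |A i j| := by
  rw [← det_transpose, det_apply', Fintype.prod_sum]
  calc |∑ σ : Equiv.Perm n, ((Equiv.Perm.sign σ : ℤ) : R) * ∏ i, Aᵀ (σ i) i|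
      ≤ ∑ σ : Equiv.Perm n, ∏ i, |A i (σ i)| := by
        refine (Finset.abs_sum_le_sum_abs _ _).trans_eq (Finset.sum_congr rfl fun σ _ => ?_)
        rw [abs_mul, ← Int.cast_abs, Equiv.Perm.sign_abs, Int.cast_one, one_mul,
          Finset.abs_prod]
        rfl
    _ = ∑ f ∈ Finset.univ.map ⟨_, Equiv.coe_fn_injective⟩, ∏ i, |A i (f i)| := by
        rw [Finset.sum_map]; rfl
    _ ≤ ∑ f : n → n, ∏ i, |A i (f i)| :=
        Finset.sum_le_univ_sum_of_nonneg fun f => Finset.prod_nonneg fun i _ => abs_nonneg _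

end Matrix

namespace RightStochastic

variable {K : ℕ}

theorem one : RightStochastic (1 : Matrix (Fin K) (Fin K) ℝ) :=
  ⟨Matrix.zero_le_one_elem, fun i => by simp [Matrix.one_apply]⟩

theorem abs_det_le_one {F : Matrix (Fin K) (Fin K) ℝ} (hF : RightStochastic F) :
    |F.det| ≤ 1 :=
  calc |F.det| ≤ ∏ i, ∑ j, |F i j| := F.abs_det_le_prod_sum_abs
    _ = 1 := by simp only [abs_of_nonneg (hF.1 _ _), hF.2, Finset.prod_const_one]

theorem abs_det_mul_le {P F : Matrix (Fin K) (Fin K) ℝ} (hF : RightStochastic F) :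
    |(P * F).det| ≤ |P.det| := by
  rw [Matrix.det_mul, abs_mul]
  exact mul_le_of_le_one_right (abs_nonneg _) hF.abs_det_le_one

end RightStochastic

theorem extreme_mixture_matrix_case_X_eq_K_general
    {K : ℕ} (D : Matrix (Fin K) (Fin K) ℝ) :
    (∀ P F : Matrix (Fin K) (Fin K) ℝ,
        RightStochastic P → RightStochastic F → D = P * F → |D.det| ≤ |P.det|) ∧
      RightStochastic (1 : Matrix (Fin K) (Fin K) ℝ) ∧
      D = D * (1 : Matrix (Fin K) (Fin K) ℝ) :=
  ⟨fun _ _ _ hF hPF => hPF ▸ hF.abs_det_mul_le, RightStochastic.one, (Matrix.mul_one D).symm⟩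

/-- In the case `|𝒳| = K`: for any factorization `D = P * F` of a right stochastic matrix
`D` into right stochastic matrices `P` and `F`, one has `|det D| ≤ |det P|`; consequently,
since `D = D * 1` with the identity matrix right stochastic, `D` itself attains the minimum
of `|det P|` over all such factorizations. -/
theorem extreme_mixture_matrix_case_X_eq_K
    {K : ℕ} (D : Matrix (Fin K) (Fin K) ℝ) (hD : RightStochastic D) :
    (∀ P F : Matrix (Fin K) (Fin K) ℝ,
        RightStochastic P → RightStochastic F → D = P * F → |D.det| ≤ |P.det|) ∧
      RightStochastic (1 : Matrix (Fin K) (Fin K) ℝ) ∧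
      D = D * (1 : Matrix (Fin K) (Fin K) ℝ) :=
  extreme_mixture_matrix_case_X_eq_K_general D
end

section
/- Let D be a K \times K right stochastic real matrix with \det D \ne 0, and let P and F be K \times K right stochastic real matrices with D = P F. If |\det P| = |\det D|, then F is a permutation matrix; hence any extreme decomposition basis in the case |\mathcal{X}| = K equals the Kronecker-delta basis up to a permutation of states. -/
/-!
Expanding `det F` over permutations gives `|det F| ≤ ∑_σ ∏ᵢ F i (σ i)`, while expanding
`∏ᵢ ∑ⱼ F i j = 1` gives the same sum over *all* maps `f : n → n`. So if `|det F| = 1`, every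
non-injective `f` has `∏ᵢ F i (f i) = 0`. Choosing a nonzero entry `g i` in each row, `g` is
therefore injective, hence a bijection; replacing `g i` by another nonzero entry `g i'` of row `i`
would give a non-injective map with nonzero product, so row `i` is zero off `g i` and `F i (g i) = 1`.
Finally `det D = det P * det F` and `|det P| = |det D| ≠ 0` give `|det F| = 1`.
-/

open scoped BigOperators

open Finset Matrix

namespace Matrix

variable {n : Type*} [Fintype n] [DecidableEq n] {F : Matrix n n ℝ}

theorem abs_det_le_sum_prod_perm_of_nonneg (hnn : ∀ i j, 0 ≤ F i j) :
    |F.det| ≤ ∑ σ : Equiv.Perm n, ∏ i, F i (σ i) := by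
  rw [← det_transpose, det_apply']
  refine (abs_sum_le_sum_abs _ _).trans_eq (sum_congr rfl fun σ _ => ?_)
  simp only [transpose_apply]
  rw [abs_mul, abs_of_nonneg (prod_nonneg fun i _ => hnn i (σ i))]
  rcases Int.units_eq_one_or (Equiv.Perm.sign σ) with h | h <;> simp [h]

theorem prod_eq_zero_of_not_injective_of_one_le_sum_prod_perm (hnn : ∀ i j, 0 ≤ F i j)
    (hrow : ∀ i, ∑ j, F i j = 1) (hperm : 1 ≤ ∑ σ : Equiv.Perm n, ∏ i, F i (σ i))
    {f : n → n} (hf : ¬ Function.Injective f) : ∏ i, F i (f i) = 0 := by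
  by_contra hne
  have hprod_nonneg : ∀ g : n → n, 0 ≤ ∏ i, F i (g i) := fun g => prod_nonneg fun i _ => hnn i _
  let perms : Finset (n → n) := univ.map ⟨fun σ : Equiv.Perm n => ⇑σ, DFunLike.coe_injective⟩
  have hf_perms : f ∉ perms := by
    simp only [perms, mem_map, mem_univ, true_and, Function.Embedding.coeFn_mk, not_exists]
    rintro σ rfl
    exact hf σ.injective
  have : ∑ σ : Equiv.Perm n, ∏ i, F i (σ i) < 1 := calc
    ∑ σ : Equiv.Perm n, ∏ i, F i (σ i) = ∑ g ∈ perms, ∏ i, F i (g i) := by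
      rw [sum_map]; rfl
    _ < ∑ g : n → n, ∏ i, F i (g i) :=
      sum_lt_sum_of_subset (subset_univ _) (mem_univ f) hf_perms
        ((hprod_nonneg f).lt_of_ne' hne) fun g _ _ => hprod_nonneg g
    _ = ∏ i, ∑ j, F i j := (Fintype.prod_sum _).symm
    _ = 1 := prod_eq_one fun i _ => hrow i
  linarith

theorem exists_perm_eq_ite_of_prod_eq_zero_of_not_injective (hrow : ∀ i, ∑ j, F i j = 1)
    (h0 : ∀ f : n → n, ¬ Function.Injective f → ∏ i, F i (f i) = 0) :
    ∃ σ : Equiv.Perm n, ∀ i j, F i j = if j = σ i then 1 else 0 := by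
  have injective_of_ne_zero : ∀ f : n → n, (∀ i, F i (f i) ≠ 0) → Function.Injective f :=
    fun f hf => not_not.1 fun h => prod_ne_zero_iff.2 (fun i _ => hf i) (h0 f h)
  have hrow_ne_zero : ∀ i, ∃ j, F i j ≠ 0 := fun i => by
    by_contra! h
    simpa [sum_eq_zero fun j _ => h j] using hrow i
  choose g hg using hrow_ne_zero
  have hg_bij : Function.Bijective g :=
    Finite.injective_iff_bijective.1 (injective_of_ne_zero g hg)
  have eq_zero_of_ne : ∀ i j, j ≠ g i → F i j = 0 := by
    intro i j hj
    by_contra hij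
    obtain ⟨i', rfl⟩ := hg_bij.2 j
    have hinj := injective_of_ne_zero (Function.update g i (g i')) fun k => by
      rcases eq_or_ne k i with rfl | hk
      · simpa using hij
      · simpa [hk] using hg k
    exact hj (congrArg g (hinj (by simp [Function.update_apply])))
  refine ⟨Equiv.ofBijective g hg_bij, fun i j => ?_⟩
  rw [Equiv.ofBijective_apply]
  split_ifs with hj
  · subst hj
    rw [← hrow i, sum_eq_single (g i) (fun j _ => eq_zero_of_ne i j) (absurd (mem_univ _))]
  · exact eq_zero_of_ne i j hj

theorem exists_perm_eq_ite_of_one_le_abs_det (hnn : ∀ i j, 0 ≤ F i j)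
    (hrow : ∀ i, ∑ j, F i j = 1) (hdet : 1 ≤ |F.det|) :
    ∃ σ : Equiv.Perm n, ∀ i j, F i j = if j = σ i then 1 else 0 :=
  exists_perm_eq_ite_of_prod_eq_zero_of_not_injective hrow fun _ hf =>
    prod_eq_zero_of_not_injective_of_one_le_sum_prod_perm hnn hrow
      (hdet.trans (abs_det_le_sum_prod_perm_of_nonneg hnn)) hf

end Matrix

theorem extreme_basis_is_permutation_case_X_eq_K_general
    {K : ℕ} (D P F : Matrix (Fin K) (Fin K) ℝ)
    (hDdet : D.det ≠ 0)
    (hF : RightStochastic F)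
    (hPF : D = P * F) (hdet : |P.det| = |D.det|) :
    ∃ σ : Equiv.Perm (Fin K), ∀ i j, F i j = if j = σ i then 1 else 0 := by
  subst hPF
  rw [det_mul] at hDdet hdet
  have hPdet : |P.det| ≠ 0 := abs_ne_zero.2 (left_ne_zero_of_mul hDdet)
  have hFdet : |F.det| = 1 := (mul_eq_left₀ hPdet).1 (by rw [← abs_mul, hdet])
  exact exists_perm_eq_ite_of_one_le_abs_det hF.1 hF.2 hFdet.ge

/-- In the case `|𝒳| = K` with `det D ≠ 0`: if `D = P * F` is a factorization into right
stochastic matrices with `|det P| = |det D|`, then `F` is a permutation matrix; i.e. any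
extreme decomposition basis equals the Kronecker-delta basis up to a permutation of states. -/
theorem extreme_basis_is_permutation_case_X_eq_K
    {K : ℕ} (D P F : Matrix (Fin K) (Fin K) ℝ)
    (hD : RightStochastic D) (hDdet : D.det ≠ 0)
    (hP : RightStochastic P) (hF : RightStochastic F)
    (hPF : D = P * F) (hdet : |P.det| = |D.det|) :
    ∃ σ : Equiv.Perm (Fin K), ∀ i j, F i j = if j = σ i then 1 else 0 :=
  extreme_basis_is_permutation_case_X_eq_K_general D P F hDdet hF hPF hdet
end

section
/- Let \mathcal{X} be a countable set and let d_A, d_B be distributions on \mathcal{X} with d_A(x) > 0 for every x \in \mathcal{X}. Suppose the set R = \{ d_B(x)/d_A(x) : x \in \mathcal{X} \} is bounded above, and let m = \inf R and M = \sup R. Let p_A, p_B \in [0,1] with p_B > p_A, and define f_1(x) = ((1-p_B) d_A(x) - (1-p_A) d_B(x)) / (p_A - p_B) and f_0(x) = (p_A d_B(x) - p_B d_A(x)) / (p_A - p_B). Then f_0(x) \ge 0 and f_1(x) \ge 0 for all x \in \mathcal{X} if and only if p_B \ge M p_A and p_B \ge 1 - m (1 - p_A). -/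
/-!
Write `r = d_B / d_A`. Since `p_A - p_B < 0` and `d_A > 0`, clearing denominators turns
`f₀ x ≥ 0` into `r x * p_A ≤ p_B` and `f₁ x ≥ 0` into `1 - p_B ≤ r x * (1 - p_A)`. Both
multipliers `p_A` and `1 - p_A` are nonnegative, so the first condition holds for every `x`
iff it holds for `M = sup r`, and the second iff it holds for `m = inf r`. The ratios are
bounded below by `0` because `d_B ≥ 0`, and `𝒳` is nonempty because `d_B` sums to `1`; on an
empty `𝒳` the junk values `sSup ∅ = sInf ∅ = 0` would make the equivalence false.
-/

open scoped BigOperators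

open Set

theorem IsDistribution.nonempty {𝒳 : Type*} {f : 𝒳 → ℝ} (hf : IsDistribution f) :
    Nonempty 𝒳 := by
  by_contra h
  rw [not_nonempty_iff] at h
  simpa using hf.2.2

section ScaledBounds

variable {ι : Type*} [Nonempty ι] {f : ι → ℝ} {c t : ℝ}

theorem sSup_range_mul_le_iff (hf : BddAbove (range f)) (hc : 0 ≤ c) :
    sSup (range f) * c ≤ t ↔ ∀ i, f i * c ≤ t := by
  refine ⟨fun h i => (mul_le_mul_of_nonneg_right (le_csSup hf ⟨i, rfl⟩) hc).trans h,
    fun h => ?_⟩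
  change (⨆ i, f i) * c ≤ t
  rw [Real.iSup_mul_of_nonneg hc]
  exact ciSup_le h

theorem le_sInf_range_mul_iff (hf : BddBelow (range f)) (hc : 0 ≤ c) :
    t ≤ sInf (range f) * c ↔ ∀ i, t ≤ f i * c := by
  refine ⟨fun h i => h.trans (mul_le_mul_of_nonneg_right (csInf_le hf ⟨i, rfl⟩) hc),
    fun h => ?_⟩
  change t ≤ (⨅ i, f i) * c
  rw [Real.iInf_mul_of_nonneg hc]
  exact le_ciInf h

end ScaledBounds

section Components

variable {a b pA pB : ℝ}

theorem component₀_nonneg_iff (ha : 0 < a) (hlt : pA < pB) :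
    0 ≤ (pA * b - pB * a) / (pA - pB) ↔ b / a * pA ≤ pB := by
  rw [le_div_iff_of_neg (sub_neg.2 hlt), zero_mul, sub_nonpos, div_mul_eq_mul_div,
    div_le_iff₀ ha, mul_comm b]

theorem component₁_nonneg_iff (ha : 0 < a) (hlt : pA < pB) :
    0 ≤ ((1 - pB) * a - (1 - pA) * b) / (pA - pB) ↔ 1 - pB ≤ b / a * (1 - pA) := by
  rw [le_div_iff_of_neg (sub_neg.2 hlt), zero_mul, sub_nonpos, div_mul_eq_mul_div,
    le_div_iff₀ ha, mul_comm b]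

end Components

theorem binary_case_nonneg_iff_general
    {𝒳 : Type*}
    (dA dB : 𝒳 → ℝ) (hdB : IsDistribution dB)
    (hpos : ∀ x, 0 < dA x)
    (hbdd : BddAbove (Set.range fun x => dB x / dA x))
    (pA pB : ℝ) (hpA0 : 0 ≤ pA) (hpB1 : pB ≤ 1)
    (hlt : pA < pB) :
    (∀ x : 𝒳,
        0 ≤ (pA * dB x - pB * dA x) / (pA - pB) ∧
        0 ≤ ((1 - pB) * dA x - (1 - pA) * dB x) / (pA - pB))
      ↔
    (sSup (Set.range fun x => dB x / dA x) * pA ≤ pB ∧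
      1 - sInf (Set.range fun x => dB x / dA x) * (1 - pA) ≤ pB) := by
  have : Nonempty 𝒳 := hdB.nonempty
  have hbddBelow : BddBelow (range fun x => dB x / dA x) :=
    ⟨0, by rintro _ ⟨x, rfl⟩; exact div_nonneg (hdB.1 x) (hpos x).le⟩
  rw [sSup_range_mul_le_iff hbdd hpA0, sub_le_comm,
    le_sInf_range_mul_iff hbddBelow (by linarith), forall_and]
  exact and_congr (forall_congr' fun x => component₀_nonneg_iff (hpos x) hlt)
    (forall_congr' fun x => component₁_nonneg_iff (hpos x) hlt)

/-- Binary case `K = 2`: for mixture coefficients `p_A, p_B ∈ [0,1]` with `p_B > p_A`, the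
decomposition basis
`f₁ x = ((1-p_B) d_A x - (1-p_A) d_B x)/(p_A - p_B)`,
`f₀ x = (p_A d_B x - p_B d_A x)/(p_A - p_B)`
is nonnegative if and only if `p_B ≥ M p_A` and `p_B ≥ 1 - m (1 - p_A)`, where `m` and `M`
are the infimum and supremum of the ratios `d_B x / d_A x`. -/
theorem binary_case_nonneg_iff
    {𝒳 : Type*} [Countable 𝒳]
    (dA dB : 𝒳 → ℝ) (hdA : IsDistribution dA) (hdB : IsDistribution dB)
    (hpos : ∀ x, 0 < dA x)
    (hbdd : BddAbove (Set.range fun x => dB x / dA x))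
    (pA pB : ℝ) (hpA0 : 0 ≤ pA) (hpA1 : pA ≤ 1) (hpB0 : 0 ≤ pB) (hpB1 : pB ≤ 1)
    (hlt : pA < pB) :
    (∀ x : 𝒳,
        0 ≤ (pA * dB x - pB * dA x) / (pA - pB) ∧
        0 ≤ ((1 - pB) * dA x - (1 - pA) * dB x) / (pA - pB))
      ↔
    (sSup (Set.range fun x => dB x / dA x) * pA ≤ pB ∧
      1 - sInf (Set.range fun x => dB x / dA x) * (1 - pA) ≤ pB) :=
  binary_case_nonneg_iff_general dA dB hdB hpos hbdd pA pB hpA0 hpB1 hlt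
end

section
/- Let m, M be real numbers with 0 \le m < 1 < M, and let S = \{ (p_A, p_B) \in \mathbb{R}^2 : 0 \le p_A \le 1, 0 \le p_B \le 1, p_B \ge M p_A, p_B \ge 1 - m(1 - p_A) \}. Then the point (\hat{p}_A, \hat{p}_B) = ((1-m)/(M-m), M(1-m)/(M-m)) belongs to S, and for every (p_A, p_B) \in S one has p_B - p_A \ge \hat{p}_B - \hat{p}_A = (M-1)(1-m)/(M-m); i.e. (\hat{p}_A, \hat{p}_B) minimizes the mixture difference p_B - p_A over S. -/
/-!
The objective is affine in the two slacks of the constraints `p_B ≥ M p_A` and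
`p_B ≥ 1 - m (1 - p_A)`:
`(M - m)(p_B - p_A) = (1 - m)(p_B - M p_A) + (M - 1)(p_B - 1 + m (1 - p_A)) + (M - 1)(1 - m)`,
with nonnegative weights `1 - m` and `M - 1`. So the minimum is attained where both
constraints are tight, at their intersection point `(p̂_A, p̂_B)`, and the box constraints
only need checking there.
-/

/-- The region `S` of the paper. -/
def binaryRegion (m M : ℝ) : Set (ℝ × ℝ) :=
  {q | 0 ≤ q.1 ∧ q.1 ≤ 1 ∧ 0 ≤ q.2 ∧ q.2 ≤ 1 ∧ M * q.1 ≤ q.2 ∧ 1 - m * (1 - q.1) ≤ q.2}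

theorem sub_mul_eq_slack_combination (m M a b : ℝ) :
    (b - a) * (M - m) =
      (1 - m) * (b - M * a) + (M - 1) * (b - (1 - m * (1 - a))) + (M - 1) * (1 - m) := by
  ring

theorem extremeValue_le_sub_of_constraints {m M a b : ℝ} (hm : m ≤ 1) (hM : 1 ≤ M) (hmM : m < M)
    (hA : M * a ≤ b) (hB : 1 - m * (1 - a) ≤ b) :
    (M - 1) * (1 - m) / (M - m) ≤ b - a := by
  rw [div_le_iff₀ (sub_pos.mpr hmM), sub_mul_eq_slack_combination]
  have hslackA : 0 ≤ (1 - m) * (b - M * a) := mul_nonneg (by linarith) (by linarith)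
  have hslackB : 0 ≤ (M - 1) * (b - (1 - m * (1 - a))) := mul_nonneg (by linarith) (by linarith)
  linarith

theorem extremePoint_mem_binaryRegion {m M : ℝ} (hm0 : 0 ≤ m) (hm1 : m < 1) (hM : 1 < M) :
    ((1 - m) / (M - m), M * (1 - m) / (M - m)) ∈ binaryRegion m M := by
  have hMm : 0 < M - m := by linarith
  have htight : 1 - m * (1 - (1 - m) / (M - m)) = M * (1 - m) / (M - m) := by
    field_simp
    ring
  refine ⟨?_, ?_, ?_, ?_, (mul_div_assoc M _ _).ge, htight.le⟩
  · exact div_nonneg (by linarith) hMm.le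
  · rw [div_le_one hMm]; linarith
  · exact div_nonneg (mul_nonneg (by linarith) (by linarith)) hMm.le
  · rw [div_le_one hMm]; nlinarith

/-- In the binary case, the point `(p̂_A, p̂_B) = ((1-m)/(M-m), M(1-m)/(M-m))` belongs to the
solution region `S` and minimizes the mixture difference `p_B - p_A` over `S`, the minimum
value being `(M-1)(1-m)/(M-m)`. -/
theorem binary_case_extreme_coefficients
    (m M : ℝ) (hm0 : 0 ≤ m) (hm1 : m < 1) (hM : 1 < M) :
    ((1 - m) / (M - m), M * (1 - m) / (M - m)) ∈
        {q : ℝ × ℝ | 0 ≤ q.1 ∧ q.1 ≤ 1 ∧ 0 ≤ q.2 ∧ q.2 ≤ 1 ∧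
          M * q.1 ≤ q.2 ∧ 1 - m * (1 - q.1) ≤ q.2} ∧
      (∀ q ∈ {q : ℝ × ℝ | 0 ≤ q.1 ∧ q.1 ≤ 1 ∧ 0 ≤ q.2 ∧ q.2 ≤ 1 ∧
          M * q.1 ≤ q.2 ∧ 1 - m * (1 - q.1) ≤ q.2},
        M * (1 - m) / (M - m) - (1 - m) / (M - m) ≤ q.2 - q.1) ∧
      M * (1 - m) / (M - m) - (1 - m) / (M - m) = (M - 1) * (1 - m) / (M - m) := by
  have hvalue : M * (1 - m) / (M - m) - (1 - m) / (M - m) = (M - 1) * (1 - m) / (M - m) := by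
    rw [← sub_div, ← sub_one_mul]
  refine ⟨extremePoint_mem_binaryRegion hm0 hm1 hM, ?_, hvalue⟩
  rintro q ⟨-, -, -, -, hA, hB⟩
  rw [hvalue]
  exact extremeValue_le_sub_of_constraints hm1.le hM.le (by linarith) hA hB
end
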